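/- If ψ : ℝ₊^m → ℝ₊ is convex, differentiable, non-decreasing, satisfies ψ(0) = 0, and has growth of order at most p > 1, then ψ*(∇ψ(u)) ≤ p · ψ(u) for every u in the non-negative orthant, where ψ* is the Fenchel conjugate of ψ. -/

import Mathlib

open Finset

/-- Fenchel conjugate over the non-negative orthant. -/
noncomputable def conjStar {m : ℕ} (ψ : (Fin m → ℝ) → ℝ) (y : Fin m → ℝ) : ℝ :=
  sSup {z : ℝ | ∃ u : Fin m → ℝ, 0 ≤ u ∧ z = (∑ i, u i * y i) - ψ u}

/-!
The supporting hyperplane of the convex function `ψ` at `u` shows that the supremum defining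
`ψ*(∇ψ(u))` is attained at `u`, so `ψ*(∇ψ(u)) ≤ ⟨∇ψ(u), u⟩ - ψ(u)`. Along the ray
`t ↦ t • u`, the growth condition applied with `α = 1/t` gives
`d/dt ψ(t • u) = ⟨∇ψ(t • u), u⟩ ≥ t^(p-1) ⟨∇ψ(u), u⟩` for `0 < t ≤ 1`; integrating over `[0, 1]` yields the Euler-type inequality
`⟨∇ψ(u), u⟩ ≤ p ψ(u)`, and `ψ(u) ≥ 0` finishes the proof.
-/

theorem ConvexOn.add_fderiv_sub_le {E : Type*} [NormedAddCommGroup E] [NormedSpace ℝ E]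
    {s : Set E} {f : E → ℝ} {f' : E →L[ℝ] ℝ} {x y : E} (hf : ConvexOn ℝ s f)
    (hx : x ∈ s) (hy : y ∈ s) (hf' : HasFDerivAt f f' x) : f x + f' (y - x) ≤ f y := by
  let L : ℝ →ᵃ[ℝ] E := AffineMap.lineMap x y
  have hL : HasDerivAt (f ∘ L) (f' (y - x)) 0 := by
    have hLx : L 0 = x := AffineMap.lineMap_apply_zero x y
    exact (hLx ▸ hf').comp_hasDerivAt 0 AffineMap.hasDerivAt_lineMap
  have hslope := (hf.comp_affineMap L).le_slope_of_hasDerivAt (x := 0) (y := 1)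
    (by simpa [L] using hx) (by simpa [L] using hy) zero_lt_one hL
  simp only [slope_def_field, Function.comp_apply, L, AffineMap.lineMap_apply_zero,
    AffineMap.lineMap_apply_one, sub_zero, div_one] at hslope
  linarith

theorem div_le_sub_of_mul_rpow_le_deriv {φ φ' : ℝ → ℝ} {c p : ℝ} (hp : 0 < p)
    (hcont : ContinuousOn φ (Set.Icc 0 1))
    (hderiv : ∀ t ∈ Set.Ioo (0 : ℝ) 1, HasDerivAt φ (φ' t) t)
    (hle : ∀ t ∈ Set.Ioo (0 : ℝ) 1, c * t ^ (p - 1) ≤ φ' t) :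
    c / p ≤ φ 1 - φ 0 := by
  let H : ℝ → ℝ := fun t => φ t - c / p * t ^ p
  have hH : MonotoneOn H (Set.Icc 0 1) := by
    refine monotoneOn_of_hasDerivWithinAt_nonneg (f' := fun t => φ' t - c / p * (p * t ^ (p - 1)))
      (convex_Icc 0 1) ?_ ?_ ?_
    · exact hcont.sub (continuousOn_const.mul
        (Real.continuous_rpow_const hp.le).continuousOn)
    · intro t ht
      rw [interior_Icc] at ht
      exact ((hderiv t ht).sub
        ((Real.hasDerivAt_rpow_const (Or.inl ht.1.ne')).const_mul (c / p))).hasDerivWithinAt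
    · intro t ht
      rw [interior_Icc] at ht
      have hcp : c / p * (p * t ^ (p - 1)) = c * t ^ (p - 1) := by field_simp
      simpa [hcp] using hle t ht
  have h01 := hH (Set.left_mem_Icc.2 zero_le_one) (Set.right_mem_Icc.2 zero_le_one) zero_le_one
  simp only [H, Real.zero_rpow hp.ne', Real.one_rpow, mul_zero, mul_one, sub_zero] at h01
  linarith

theorem sum_smul_proj_apply {m : ℕ} (c w : Fin m → ℝ) :
    (∑ i, c i • (ContinuousLinearMap.proj i : (Fin m → ℝ) →L[ℝ] ℝ)) w = ∑ i, c i * w i := by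
  simp

section Orthant

variable {m : ℕ} {ψ : (Fin m → ℝ) → ℝ} {g : (Fin m → ℝ) → (Fin m → ℝ)}

theorem conjStar_grad_le_sum_mul_sub (hconv : ConvexOn ℝ {u : Fin m → ℝ | 0 ≤ u} ψ)
    (hdiff : ∀ u : Fin m → ℝ, 0 ≤ u →
      HasFDerivAt ψ (∑ i, g u i • (ContinuousLinearMap.proj i : (Fin m → ℝ) →L[ℝ] ℝ)) u)
    {u : Fin m → ℝ} (hu : 0 ≤ u) :
    conjStar ψ (g u) ≤ ∑ i, u i * g u i - ψ u := by
  refine csSup_le ⟨_, u, hu, rfl⟩ ?_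
  rintro z ⟨v, hv, rfl⟩
  have hsupport := hconv.add_fderiv_sub_le hu hv (hdiff u hu)
  simp only [sum_smul_proj_apply, Pi.sub_apply, mul_sub, sum_sub_distrib] at hsupport
  simp only [mul_comm (g u _)] at hsupport
  linarith

theorem mul_rpow_le_sum_mul_grad_smul {p : ℝ}
    (hgrowth : ∀ u : Fin m → ℝ, 0 ≤ u → ∀ α : ℝ, 1 ≤ α → ∀ i, g (α • u) i ≤ α ^ (p - 1) * g u i)
    {u : Fin m → ℝ} (hu : 0 ≤ u) {t : ℝ} (ht : t ∈ Set.Ioc (0 : ℝ) 1) :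
    (∑ i, u i * g u i) * t ^ (p - 1) ≤ ∑ i, u i * g (t • u) i := by
  have htu : 0 ≤ t • u := smul_nonneg ht.1.le hu
  have hα : 1 ≤ t⁻¹ := one_le_inv₀ ht.1 |>.2 ht.2
  have hcancel : t ^ (p - 1) * t⁻¹ ^ (p - 1) = 1 := by
    rw [← Real.mul_rpow ht.1.le (inv_nonneg.2 ht.1.le), mul_inv_cancel₀ ht.1.ne', Real.one_rpow]
  rw [sum_mul]
  refine sum_le_sum fun i _ => ?_
  have hi := hgrowth (t • u) htu t⁻¹ hα i
  rw [inv_smul_smul₀ ht.1.ne'] at hi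
  calc u i * g u i * t ^ (p - 1)
      ≤ u i * (t⁻¹ ^ (p - 1) * g (t • u) i) * t ^ (p - 1) := by
        gcongr
        · exact Real.rpow_nonneg ht.1.le _
        · exact hu i
    _ = u i * g (t • u) i := by linear_combination (u i * g (t • u) i) * hcancel

theorem sum_mul_grad_le_mul {p : ℝ} (hp : 0 < p)
    (hdiff : ∀ u : Fin m → ℝ, 0 ≤ u →
      HasFDerivAt ψ (∑ i, g u i • (ContinuousLinearMap.proj i : (Fin m → ℝ) →L[ℝ] ℝ)) u)
    (hzero : ψ 0 = 0)
    (hgrowth : ∀ u : Fin m → ℝ, 0 ≤ u → ∀ α : ℝ, 1 ≤ α → ∀ i, g (α • u) i ≤ α ^ (p - 1) * g u i)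
    {u : Fin m → ℝ} (hu : 0 ≤ u) :
    ∑ i, u i * g u i ≤ p * ψ u := by
  have hray : ∀ t : ℝ, 0 ≤ t → HasDerivAt (fun s : ℝ => ψ (s • u)) (∑ i, u i * g (t • u) i) t := by
    intro t ht
    have h := (hdiff (t • u) (smul_nonneg ht hu)).comp_hasDerivAt t
      ((hasDerivAt_id t).smul_const u)
    simp only [sum_smul_proj_apply, one_smul, mul_comm (g _ _)] at h
    exact h
  have h := div_le_sub_of_mul_rpow_le_deriv hp
    (fun t ht => (hray t ht.1).continuousAt.continuousWithinAt)
    (fun t ht => hray t ht.1.le)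
    (fun t ht => mul_rpow_le_sum_mul_grad_smul hgrowth hu (Set.Ioo_subset_Ioc_self ht))
  simp only [one_smul, zero_smul, hzero, sub_zero] at h
  rwa [div_le_iff₀ hp, mul_comm] at h

end Orthant

theorem stmt2_general {m : ℕ} (p : ℝ) (hp : 1 < p)
    (ψ : (Fin m → ℝ) → ℝ) (g : (Fin m → ℝ) → (Fin m → ℝ))
    (hψnonneg : ∀ u : Fin m → ℝ, 0 ≤ u → 0 ≤ ψ u)
    (hconv : ConvexOn ℝ {u : Fin m → ℝ | 0 ≤ u} ψ)
    (hdiff : ∀ u : Fin m → ℝ, 0 ≤ u →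
      HasFDerivAt ψ (∑ i, g u i • (ContinuousLinearMap.proj i : (Fin m → ℝ) →L[ℝ] ℝ)) u)
    (hzero : ψ 0 = 0)
    (hgrowth : ∀ u : Fin m → ℝ, 0 ≤ u → ∀ α : ℝ, 1 ≤ α → ∀ i, g (α • u) i ≤ α ^ (p - 1) * g u i) :
    ∀ u : Fin m → ℝ, 0 ≤ u → conjStar ψ (g u) ≤ p * ψ u := by
  intro u hu
  have hconj := conjStar_grad_le_sum_mul_sub hconv hdiff hu
  have heuler := sum_mul_grad_le_mul (by linarith) hdiff hzero hgrowth hu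
  linarith [hψnonneg u hu]

/-- under convexity, differentiability, monotonicity, ψ(0)=0 and growth of order
at most p > 1, we have ψ*(∇ψ(u)) ≤ p·ψ(u) for every u ≥ 0. -/
theorem stmt2 {m : ℕ} (p : ℝ) (hp : 1 < p)
    (ψ : (Fin m → ℝ) → ℝ) (g : (Fin m → ℝ) → (Fin m → ℝ))
    (hψnonneg : ∀ u : Fin m → ℝ, 0 ≤ u → 0 ≤ ψ u)
    (hconv : ConvexOn ℝ {u : Fin m → ℝ | 0 ≤ u} ψ)
    (hdiff : ∀ u : Fin m → ℝ, 0 ≤ u →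
      HasFDerivAt ψ (∑ i, g u i • (ContinuousLinearMap.proj i : (Fin m → ℝ) →L[ℝ] ℝ)) u)
    (hmono : ∀ u v : Fin m → ℝ, 0 ≤ u → u ≤ v → ψ u ≤ ψ v)
    (hzero : ψ 0 = 0)
    (hgrowth : ∀ u : Fin m → ℝ, 0 ≤ u → ∀ α : ℝ, 1 ≤ α → ∀ i, g (α • u) i ≤ α ^ (p - 1) * g u i)
    (hbdd : ∀ y : Fin m → ℝ, BddAbove {z : ℝ | ∃ u : Fin m → ℝ, 0 ≤ u ∧ z = (∑ i, u i * y i) - ψ u}) :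
    ∀ u : Fin m → ℝ, 0 ≤ u → conjStar ψ (g u) ≤ p * ψ u :=
  stmt2_general p hp ψ g hψnonneg hconv hdiff hzero hgrowth
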